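/- arXiv:1201.4244 — 3 statements merged into one kernel-verified Lean document; each statement's English description precedes it below -/
import Mathlib

section
/- The convex hull ℳ^c of the Born–Infeld manifold ℳ contains the set {(D,B,P,h) ∈ ℝ³×ℝ³×ℝ³×ℝ : h ≥ 1 + |D| + |B| + |P|}. -/
open MeasureTheory Metric Set Filter
open scoped Topology

noncomputable section

/-- Euclidean space `ℝⁿ`. -/
abbrev Euc (n : ℕ) : Type := EuclideanSpace ℝ (Fin n)

/-- The cross product `u ∧ v` on `ℝ³`. -/
def cross3 (u v : Euc 3) : Euc 3 :=
  (EuclideanSpace.equiv (Fin 3) ℝ).symm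
    ![u 1 * v 2 - u 2 * v 1, u 2 * v 0 - u 0 * v 2, u 0 * v 1 - u 1 * v 0]

/-- The `D`-component of a point of `ℝ¹⁰ = ℝ³×ℝ³×ℝ³×ℝ`. -/
def pD (v : Euc 10) : Euc 3 := (EuclideanSpace.equiv (Fin 3) ℝ).symm ![v 0, v 1, v 2]
/-- The `B`-component of a point of `ℝ¹⁰ = ℝ³×ℝ³×ℝ³×ℝ`. -/
def pB (v : Euc 10) : Euc 3 := (EuclideanSpace.equiv (Fin 3) ℝ).symm ![v 3, v 4, v 5]
/-- The `P`-component of a point of `ℝ¹⁰ = ℝ³×ℝ³×ℝ³×ℝ`. -/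
def pP (v : Euc 10) : Euc 3 := (EuclideanSpace.equiv (Fin 3) ℝ).symm ![v 6, v 7, v 8]
/-- The `h`-component of a point of `ℝ¹⁰ = ℝ³×ℝ³×ℝ³×ℝ`. -/
def pH (v : Euc 10) : ℝ := v 9

/-- Build a point of `ℝ¹⁰` from its components `(D,B,P,h)`. -/
def mk10 (d b p : Euc 3) (h : ℝ) : Euc 10 :=
  (EuclideanSpace.equiv (Fin 10) ℝ).symm
    ![d 0, d 1, d 2, b 0, b 1, b 2, p 0, p 1, p 2, h]

/-- The Born–Infeld manifold `ℳ ⊂ ℝ¹⁰`. -/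
def BImanifold : Set (Euc 10) :=
  {v | pP v = cross3 (pD v) (pB v) ∧
       pH v = Real.sqrt (1 + ‖pD v‖ ^ 2 + ‖pB v‖ ^ 2 + ‖pP v‖ ^ 2)}

/-- `φ` is a test function on `Ω` (smooth, compactly supported inside `Ω`). -/
def IsTestOn {n : ℕ} (Ω : Set (Euc n)) (φ : Euc n → ℝ) : Prop :=
  ContDiff ℝ (⊤ : ℕ∞) φ ∧ HasCompactSupport φ ∧ tsupport φ ⊆ Ω

/-- The `i`-th partial derivative of `φ : ℝⁿ → ℝ`. -/
def pdiff {n : ℕ} (i : Fin n) (φ : Euc n → ℝ) (x : Euc n) : ℝ :=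
  fderiv ℝ φ x (EuclideanSpace.single i 1)

/-- `W : Ω → ℝⁿ` is divergence free on `Ω` in the distributional sense:
`∫_Ω W · ∇φ = 0` for all test functions `φ` on `Ω`. -/
def DistDivFreeOn {n : ℕ} (Ω : Set (Euc n)) (W : Euc n → Euc n) : Prop :=
  ∀ φ, IsTestOn Ω φ → ∫ x in Ω, (∑ i, W x i * pdiff i φ x) = 0

/-- A matrix field `W : Ω → ℝ^{m×n}` is rowwise divergence free on `Ω`
in the distributional sense. -/
def MatrixDivFreeOn {n m : ℕ} (Ω : Set (Euc n))
    (W : Euc n → Matrix (Fin m) (Fin n) ℝ) : Prop :=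
  ∀ φ, IsTestOn Ω φ → ∀ k : Fin m, ∫ x in Ω, (∑ j, W x k j * pdiff j φ x) = 0

/-- `W = ℒ(G)` on `Ω` in the distributional sense, where
`(ℒ G)_{kj} = ∑_i ∂ G^k_{ij} / ∂ x_i`:  for all test functions `φ`,
`∫_Ω W_{kj} φ = - ∑_i ∫_Ω G^k_{ij} ∂_i φ`. -/
def IsLPotentialOn {n m : ℕ} (Ω : Set (Euc n))
    (G : Euc n → Fin m → Matrix (Fin n) (Fin n) ℝ)
    (W : Euc n → Matrix (Fin m) (Fin n) ℝ) : Prop :=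
  ∀ φ, IsTestOn Ω φ → ∀ (k : Fin m) (j : Fin n),
    ∫ x in Ω, W x k j * φ x = - ∫ x in Ω, (∑ i, G x k i j * pdiff i φ x)

/-- An open set `U ⊂ ℝⁿ` has Lipschitz boundary:  near every boundary point, `U` is
the open epigraph of a Lipschitz function in a suitable direction `v`. -/
def HasLipschitzBoundary {n : ℕ} (U : Set (Euc n)) : Prop :=
  ∀ x ∈ frontier U, ∃ (v : Euc n) (ψ : Euc n → ℝ) (C : NNReal) (r : ℝ),
    0 < r ∧ ‖v‖ = 1 ∧ LipschitzWith C ψ ∧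
    ∀ y ∈ ball x r, (y ∈ U ↔ ψ (y - (inner ℝ y v : ℝ) • v) < (inner ℝ y v : ℝ))

/-- `f` is piecewise constant on `Ω`: there are countably many mutually disjoint
open subsets of `Ω` with Lipschitz boundary, covering `Ω` up to a null set, on each of
which `f` is constant. -/
def PiecewiseConstantOn {n : ℕ} {α : Type*} (Ω : Set (Euc n)) (f : Euc n → α) : Prop :=
  ∃ U : ℕ → Set (Euc n),
    (∀ i, IsOpen (U i)) ∧ (∀ i, U i ⊆ Ω) ∧ (∀ i, HasLipschitzBoundary (U i)) ∧
    Pairwise (Function.onFun Disjoint U) ∧ volume (Ω \ ⋃ i, U i) = 0 ∧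
    ∀ i, ∃ c : α, ∀ x ∈ U i, f x = c

/-- `f` is piecewise affine (= "piecewise linear") on `Ω`: there are countably many
mutually disjoint open subsets of `Ω` with Lipschitz boundary, covering `Ω` up to a
null set, on each of which `f` is affine. -/
def PiecewiseAffineOn {n : ℕ} {α : Type*} [AddCommGroup α] [Module ℝ α]
    (Ω : Set (Euc n)) (f : Euc n → α) : Prop :=
  ∃ U : ℕ → Set (Euc n),
    (∀ i, IsOpen (U i)) ∧ (∀ i, U i ⊆ Ω) ∧ (∀ i, HasLipschitzBoundary (U i)) ∧
    Pairwise (Function.onFun Disjoint U) ∧ volume (Ω \ ⋃ i, U i) = 0 ∧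
    ∀ i, ∃ (L : Euc n →ₗ[ℝ] α) (c : α), ∀ x ∈ U i, f x = L x + c

/-- A scalar function belongs to `W^{1,∞}(Ω)`: it is Lipschitz and bounded on `Ω`. -/
def MemW1inf {n : ℕ} (Ω : Set (Euc n)) (f : Euc n → ℝ) : Prop :=
  (∃ C : NNReal, LipschitzOnWith C f Ω) ∧ ∃ M : ℝ, ∀ x ∈ Ω, |f x| ≤ M

/-- A set of `m×n` matrices is lamination convex: stable under convex combinations of
pairs of its elements whose difference has rank at most `n-1`. -/
def IsLamConvex {m n : ℕ} (K : Set (Matrix (Fin m) (Fin n) ℝ)) : Prop :=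
  ∀ A ∈ K, ∀ B ∈ K, (A - B).rank ≤ n - 1 → ∀ θ : ℝ, θ ∈ Set.Ioo (0:ℝ) 1 →
    θ • A + (1 - θ) • B ∈ K

/-- The lamination convex hull: the smallest lamination convex set containing `K`. -/
def lamHull {m n : ℕ} (K : Set (Matrix (Fin m) (Fin n) ℝ)) :
    Set (Matrix (Fin m) (Fin n) ℝ) :=
  ⋂₀ {S | K ⊆ S ∧ IsLamConvex S}

/-- The sequence of open sets `U i` is an in-approximation of `K` (with respect to the
rank-(n-1) lamination convex hull). -/
def IsInApproximation {m n : ℕ} (U : ℕ → Set (Matrix (Fin m) (Fin n) ℝ))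
    (K : Set (Matrix (Fin m) (Fin n) ℝ)) : Prop :=
  (∀ i, IsOpen (U i)) ∧ (∀ i, U i ⊆ lamHull (U (i + 1))) ∧
  (∃ R : ℝ, ∀ i, ∀ A ∈ U i, ∀ k j, |A k j| ≤ R) ∧
  ∀ (F : ℕ → Matrix (Fin m) (Fin n) ℝ) (F₀ : Matrix (Fin m) (Fin n) ℝ),
    (∀ i, F i ∈ U i) → Tendsto F atTop (𝓝 F₀) → F₀ ∈ K

/-- The `2×3` matrix field whose rows are `V_D^T` and `V_B^T`. -/
def DBmat (v : Euc 10) : Matrix (Fin 2) (Fin 3) ℝ :=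
  Matrix.of fun k j => if k = 0 then pD v j else pB v j

end
noncomputable section BIaux

namespace BIaux

lemma euc_symm_apply {n : ℕ} (x : Fin n → ℝ) (i : Fin n) :
    ((EuclideanSpace.equiv (Fin n) ℝ).symm x) i = x i := rfl

lemma norm3_sq (x : Euc 3) : ‖x‖ ^ 2 = x 0 ^ 2 + x 1 ^ 2 + x 2 ^ 2 := by
  rw [EuclideanSpace.norm_eq, Real.sq_sqrt (by positivity)]
  simp [Fin.sum_univ_three, sq_abs]

lemma norm3_eq {x : Euc 3} {c : ℝ} (hc : 0 ≤ c) (h : ‖x‖ ^ 2 = c ^ 2) : ‖x‖ = c := by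
  rw [← Real.sqrt_sq (norm_nonneg x), h, Real.sqrt_sq hc]

/-- dot product on `Euc 3`, coordinatewise. -/
def dot3 (u v : Euc 3) : ℝ := u 0 * v 0 + u 1 * v 1 + u 2 * v 2

lemma dot3_self (u : Euc 3) : dot3 u u = ‖u‖ ^ 2 := by rw [norm3_sq]; unfold dot3; ring

lemma dot3_comm (u v : Euc 3) : dot3 u v = dot3 v u := by unfold dot3; ring

lemma dot3_smul_right (u v : Euc 3) (c : ℝ) : dot3 u (c • v) = c * dot3 u v := by
  simp only [dot3, PiLp.smul_apply, smul_eq_mul]; ring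

lemma dot3_cross_left (u v : Euc 3) : dot3 u (cross3 u v) = 0 := by
  simp only [dot3, cross3, euc_symm_apply]
  simp [Matrix.cons_val_zero, Matrix.cons_val_one]; ring

lemma cross3_apply0 (u v : Euc 3) : cross3 u v 0 = u 1 * v 2 - u 2 * v 1 := rfl
lemma cross3_apply1 (u v : Euc 3) : cross3 u v 1 = u 2 * v 0 - u 0 * v 2 := rfl
lemma cross3_apply2 (u v : Euc 3) : cross3 u v 2 = u 0 * v 1 - u 1 * v 0 := rfl

lemma euc3_ext {u v : Euc 3} (h0 : u 0 = v 0) (h1 : u 1 = v 1) (h2 : u 2 = v 2) : u = v := by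
  ext i
  fin_cases i <;> assumption

lemma lagrange (u v : Euc 3) : ‖cross3 u v‖ ^ 2 = ‖u‖ ^ 2 * ‖v‖ ^ 2 - dot3 u v ^ 2 := by
  rw [norm3_sq, norm3_sq, norm3_sq, cross3_apply0, cross3_apply1, cross3_apply2]
  unfold dot3; ring

lemma cross3_zero_right (u : Euc 3) : cross3 u 0 = 0 := by
  apply euc3_ext <;>
    simp [cross3_apply0, cross3_apply1, cross3_apply2]

lemma cross3_smul_left (u v : Euc 3) (c : ℝ) : cross3 (c • u) v = c • cross3 u v := by
  apply euc3_ext <;>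
    simp only [cross3_apply0, cross3_apply1, cross3_apply2, PiLp.smul_apply, smul_eq_mul] <;> ring

lemma cross3_smul_right (u v : Euc 3) (c : ℝ) : cross3 u (c • v) = c • cross3 u v := by
  apply euc3_ext <;>
    simp only [cross3_apply0, cross3_apply1, cross3_apply2, PiLp.smul_apply, smul_eq_mul] <;> ring

lemma cross3_neg_neg (u v : Euc 3) : cross3 (-u) (-v) = cross3 u v := by
  apply euc3_ext <;>
    simp only [cross3_apply0, cross3_apply1, cross3_apply2, PiLp.neg_apply] <;> ring

/-- `u × (v × u) = (u·u) v - (u·v) u`. -/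
lemma triple (u v : Euc 3) : cross3 u (cross3 v u) = dot3 u u • v - dot3 u v • u := by
  apply euc3_ext <;>
    simp only [cross3_apply0, cross3_apply1, cross3_apply2, PiLp.sub_apply, PiLp.smul_apply,
      smul_eq_mul, dot3] <;> ring

lemma pD_mk10 (d b p : Euc 3) (h : ℝ) : pD (mk10 d b p h) = d := by
  apply euc3_ext <;> rfl

lemma pB_mk10 (d b p : Euc 3) (h : ℝ) : pB (mk10 d b p h) = b := by
  apply euc3_ext <;> rfl

lemma pP_mk10 (d b p : Euc 3) (h : ℝ) : pP (mk10 d b p h) = p := by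
  apply euc3_ext <;> rfl

lemma pH_mk10 (d b p : Euc 3) (h : ℝ) : pH (mk10 d b p h) = h := rfl

lemma mk10_eq (v : Euc 10) : mk10 (pD v) (pB v) (pP v) (pH v) = v := by
  ext i
  fin_cases i <;> rfl

lemma mk10_add (d b p : Euc 3) (h : ℝ) (d' b' p' : Euc 3) (h' : ℝ) :
    mk10 d b p h + mk10 d' b' p' h' = mk10 (d + d') (b + b') (p + p') (h + h') := by
  ext i
  fin_cases i <;> rfl

lemma mk10_smul (d b p : Euc 3) (h : ℝ) (c : ℝ) :
    c • mk10 d b p h = mk10 (c • d) (c • b) (c • p) (c * h) := by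
  ext i
  fin_cases i <;> rfl

lemma mem_M (d b : Euc 3) :
    mk10 d b (cross3 d b) (Real.sqrt (1 + ‖d‖ ^ 2 + ‖b‖ ^ 2 + ‖cross3 d b‖ ^ 2)) ∈ BImanifold := by
  constructor <;>
    simp [pD_mk10, pB_mk10, pP_mk10, pH_mk10]

end BIaux

end BIaux
noncomputable section BIaux2
namespace BIaux
open Real

lemma exists_cross_ne (n : Euc 3) (hn : n ≠ 0) : ∃ e : Euc 3, cross3 n e ≠ 0 := by
  by_contra hc
  push_neg at hc
  apply hn
  have h1 := congrArg (fun x : Euc 3 => x 1) (hc ((EuclideanSpace.equiv (Fin 3) ℝ).symm ![1, 0, 0]))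
  have h2 := congrArg (fun x : Euc 3 => x 2) (hc ((EuclideanSpace.equiv (Fin 3) ℝ).symm ![1, 0, 0]))
  have h3 := congrArg (fun x : Euc 3 => x 2) (hc ((EuclideanSpace.equiv (Fin 3) ℝ).symm ![0, 1, 0]))
  simp only [cross3_apply1, cross3_apply2, euc_symm_apply] at h1 h2 h3
  norm_num at h1 h2 h3
  apply euc3_ext <;> simp only [PiLp.zero_apply]
  · -- n 0 = 0 from h3 : n 0 * 1 - n 1 * 0 = 0
    linarith [h3]
  · linarith [h2]
  · rw [show (![1, 0, 0] : Fin 3 → ℝ) 2 = 0 from rfl] at h1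
    linarith [h1]

lemma exists_frame (n : Euc 3) (hn : ‖n‖ = 1) :
    ∃ u w : Euc 3, ‖u‖ = 1 ∧ ‖w‖ = 1 ∧ cross3 u w = n := by
  have hn0 : n ≠ 0 := by intro h; rw [h, norm_zero] at hn; norm_num at hn
  obtain ⟨e, he⟩ := exists_cross_ne n hn0
  set c := cross3 n e with hc
  have hcn : ‖c‖ ≠ 0 := norm_ne_zero_iff.2 he
  set u := ‖c‖⁻¹ • c with hu
  have hu1 : ‖u‖ = 1 := by
    rw [hu, norm_smul, norm_inv, norm_norm, inv_mul_cancel₀ hcn]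
  have hnu : dot3 n u = 0 := by
    rw [hu, dot3_smul_right, hc, dot3_cross_left, mul_zero]
  refine ⟨u, cross3 n u, hu1, ?_, ?_⟩
  · apply norm3_eq (by norm_num)
    rw [lagrange, hn, hu1, hnu]; norm_num
  · rw [triple, dot3_self, hu1, dot3_comm, hnu]
    simp

lemma hull_convex2 {x y : Euc 10} (hx : x ∈ convexHull ℝ BImanifold)
    (hy : y ∈ convexHull ℝ BImanifold) {a : ℝ} (ha : 0 ≤ a) (ha1 : a ≤ 1) :
    a • x + (1 - a) • y ∈ convexHull ℝ BImanifold :=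
  (convex_convexHull ℝ BImanifold) hx hy ha (by linarith) (by ring)

lemma hullA (d : Euc 3) (h : ℝ) (hd : Real.sqrt (1 + ‖d‖ ^ 2) ≤ h) :
    mk10 d 0 0 h ∈ convexHull ℝ BImanifold := by
  have h1 : (1 : ℝ) ≤ h := by
    calc (1:ℝ) = Real.sqrt 1 := (Real.sqrt_one).symm
    _ ≤ Real.sqrt (1 + ‖d‖ ^ 2) := Real.sqrt_le_sqrt (by nlinarith [sq_nonneg ‖d‖])
    _ ≤ h := hd
  have hsq : 1 + ‖d‖ ^ 2 ≤ h ^ 2 := by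
    nlinarith [Real.sq_sqrt (show (0:ℝ) ≤ 1 + ‖d‖ ^ 2 by positivity),
      Real.sqrt_nonneg (1 + ‖d‖ ^ 2)]
  set t := Real.sqrt (h ^ 2 - 1) with hTdef
  have ht0 : 0 ≤ t := Real.sqrt_nonneg _
  have ht2 : t ^ 2 = h ^ 2 - 1 := Real.sq_sqrt (by nlinarith)
  have htd : ‖d‖ ≤ t := by
    rw [hTdef, ← Real.sqrt_sq (norm_nonneg d)]
    exact Real.sqrt_le_sqrt (by nlinarith)
  obtain ⟨e, he, hde⟩ : ∃ e : Euc 3, ‖e‖ = 1 ∧ d = ‖d‖ • e := by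
    rcases eq_or_ne d 0 with rfl | hd0
    · refine ⟨(EuclideanSpace.equiv (Fin 3) ℝ).symm ![1, 0, 0], ?_, by simp⟩
      apply norm3_eq (by norm_num)
      rw [norm3_sq]; norm_num [euc_symm_apply]
      rfl
    · refine ⟨‖d‖⁻¹ • d, ?_, (smul_inv_smul₀ (norm_ne_zero_iff.2 hd0) d).symm⟩
      rw [norm_smul, norm_inv, norm_norm, inv_mul_cancel₀ (norm_ne_zero_iff.2 hd0)]
  have hte : ‖t • e‖ ^ 2 = t ^ 2 := by
    rw [norm_smul, he, mul_one, Real.norm_eq_abs, sq_abs]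
  have hte' : ‖-(t • e)‖ ^ 2 = t ^ 2 := by rw [norm_neg]; exact hte
  have hsqrt : Real.sqrt (1 + t ^ 2 + ‖(0:Euc 3)‖ ^ 2 + ‖(0:Euc 3)‖ ^ 2) = h := by
    rw [norm_zero, ht2]
    rw [show 1 + (h ^ 2 - 1) + 0 ^ 2 + 0 ^ 2 = h ^ 2 by ring, Real.sqrt_sq (by linarith)]
  have mem1 : mk10 (t • e) 0 0 h ∈ BImanifold := by
    have := mem_M (t • e) 0
    rwa [cross3_zero_right, hte, hsqrt] at this
  have mem2 : mk10 (-(t • e)) 0 0 h ∈ BImanifold := by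
    have := mem_M (-(t • e)) 0
    rwa [cross3_zero_right, hte', hsqrt] at this
  rcases eq_or_lt_of_le ht0 with ht0' | htpos
  · -- t = 0, so d = 0 and h = 1
    have hd0 : d = 0 := by
      have : ‖d‖ = 0 := le_antisymm (by linarith) (norm_nonneg d)
      exact norm_eq_zero.1 this
    have : mk10 d 0 0 h ∈ BImanifold := by
      rw [hd0]
      have heq : (0 : Euc 3) = (0:ℝ) • e := by simp
      have := mem1
      rw [← ht0'] at this
      simpa using this
    exact subset_convexHull ℝ _ this
  · set μ := (1 + ‖d‖ / t) / 2 with hμ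
    have hμ0 : 0 ≤ μ := by
      have : 0 ≤ ‖d‖ / t := div_nonneg (norm_nonneg d) (le_of_lt htpos)
      rw [hμ]; linarith
    have hμ1 : μ ≤ 1 := by
      have : ‖d‖ / t ≤ 1 := (div_le_one htpos).2 htd
      rw [hμ]; linarith
    have key := hull_convex2 (subset_convexHull ℝ _ mem1) (subset_convexHull ℝ _ mem2) hμ0 hμ1
    have heq : mk10 d 0 0 h =
        μ • mk10 (t • e) 0 0 h + (1 - μ) • mk10 (-(t • e)) 0 0 h := by
      rw [mk10_smul, mk10_smul, mk10_add]
      have hh : μ * h + (1 - μ) * h = h := by ring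
      rw [hh]
      have hdc : d = μ • t • e + (1 - μ) • -(t • e) := by
        have hv : μ • t • e + (1 - μ) • -(t • e) = ((2 * μ - 1) * t) • e := by
          module
        rw [hv, hde]
        congr 1
        rw [hμ]
        field_simp
        ring
      simp only [smul_zero, add_zero]
      rw [← hdc]
    rw [heq]
    exact key

lemma hullB (b : Euc 3) (h : ℝ) (hb : Real.sqrt (1 + ‖b‖ ^ 2) ≤ h) :
    mk10 0 b 0 h ∈ convexHull ℝ BImanifold := by
  have h1 : (1 : ℝ) ≤ h := by
    calc (1:ℝ) = Real.sqrt 1 := (Real.sqrt_one).symm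
    _ ≤ Real.sqrt (1 + ‖b‖ ^ 2) := Real.sqrt_le_sqrt (by nlinarith [sq_nonneg ‖b‖])
    _ ≤ h := hb
  have hsq : 1 + ‖b‖ ^ 2 ≤ h ^ 2 := by
    nlinarith [Real.sq_sqrt (show (0:ℝ) ≤ 1 + ‖b‖ ^ 2 by positivity),
      Real.sqrt_nonneg (1 + ‖b‖ ^ 2)]
  set t := Real.sqrt (h ^ 2 - 1) with hTdef
  have ht0 : 0 ≤ t := Real.sqrt_nonneg _
  have ht2 : t ^ 2 = h ^ 2 - 1 := Real.sq_sqrt (by nlinarith)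
  have htd : ‖b‖ ≤ t := by
    rw [hTdef, ← Real.sqrt_sq (norm_nonneg b)]
    exact Real.sqrt_le_sqrt (by nlinarith)
  obtain ⟨e, he, hde⟩ : ∃ e : Euc 3, ‖e‖ = 1 ∧ b = ‖b‖ • e := by
    rcases eq_or_ne b 0 with rfl | hb0
    · refine ⟨(EuclideanSpace.equiv (Fin 3) ℝ).symm ![1, 0, 0], ?_, by simp⟩
      apply norm3_eq (by norm_num)
      rw [norm3_sq]; norm_num [euc_symm_apply]
      rfl
    · refine ⟨‖b‖⁻¹ • b, ?_, (smul_inv_smul₀ (norm_ne_zero_iff.2 hb0) b).symm⟩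
      rw [norm_smul, norm_inv, norm_norm, inv_mul_cancel₀ (norm_ne_zero_iff.2 hb0)]
  have hzc : ∀ u : Euc 3, cross3 0 u = 0 := by
    intro u
    apply euc3_ext <;>
      simp [cross3_apply0, cross3_apply1, cross3_apply2]
  have hte : ‖t • e‖ ^ 2 = t ^ 2 := by
    rw [norm_smul, he, mul_one, Real.norm_eq_abs, sq_abs]
  have hte' : ‖-(t • e)‖ ^ 2 = t ^ 2 := by rw [norm_neg]; exact hte
  have hsqrt : Real.sqrt (1 + ‖(0:Euc 3)‖ ^ 2 + t ^ 2 + ‖(0:Euc 3)‖ ^ 2) = h := by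
    rw [norm_zero, ht2]
    rw [show 1 + 0 ^ 2 + (h ^ 2 - 1) + 0 ^ 2 = h ^ 2 by ring, Real.sqrt_sq (by linarith)]
  have mem1 : mk10 0 (t • e) 0 h ∈ BImanifold := by
    have := mem_M 0 (t • e)
    rwa [hzc, hte, hsqrt] at this
  have mem2 : mk10 0 (-(t • e)) 0 h ∈ BImanifold := by
    have := mem_M 0 (-(t • e))
    rwa [hzc, hte', hsqrt] at this
  rcases eq_or_lt_of_le ht0 with ht0' | htpos
  · have hb0 : b = 0 := by
      have : ‖b‖ = 0 := le_antisymm (by linarith) (norm_nonneg b)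
      exact norm_eq_zero.1 this
    have : mk10 0 b 0 h ∈ BImanifold := by
      rw [hb0]
      have := mem1
      rw [← ht0'] at this
      simpa using this
    exact subset_convexHull ℝ _ this
  · set μ := (1 + ‖b‖ / t) / 2 with hμ
    have hμ0 : 0 ≤ μ := by
      have : 0 ≤ ‖b‖ / t := div_nonneg (norm_nonneg b) (le_of_lt htpos)
      rw [hμ]; linarith
    have hμ1 : μ ≤ 1 := by
      have : ‖b‖ / t ≤ 1 := (div_le_one htpos).2 htd
      rw [hμ]; linarith
    have key := hull_convex2 (subset_convexHull ℝ _ mem1) (subset_convexHull ℝ _ mem2) hμ0 hμ1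
    have heq : mk10 0 b 0 h =
        μ • mk10 0 (t • e) 0 h + (1 - μ) • mk10 0 (-(t • e)) 0 h := by
      rw [mk10_smul, mk10_smul, mk10_add]
      have hh : μ * h + (1 - μ) * h = h := by ring
      rw [hh]
      have hdc : b = μ • t • e + (1 - μ) • -(t • e) := by
        have hv : μ • t • e + (1 - μ) • -(t • e) = ((2 * μ - 1) * t) • e := by
          module
        rw [hv, hde]
        congr 1
        rw [hμ]
        field_simp
        ring
      simp only [smul_zero, add_zero]
      rw [← hdc]
    rw [heq]
    exact key

end BIaux
end BIaux2
noncomputable section BIaux3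
namespace BIaux

lemma hullC (p : Euc 3) (h : ℝ) (hp : 1 + ‖p‖ ≤ h) :
    mk10 0 0 p h ∈ convexHull ℝ BImanifold := by
  rcases eq_or_ne p 0 with rfl | hp0
  · have : Real.sqrt (1 + ‖(0:Euc 3)‖ ^ 2) ≤ h := by
      rw [norm_zero] at hp ⊢
      norm_num
      linarith
    exact hullA 0 h this
  · have hpnorm : 0 < ‖p‖ := norm_pos_iff.2 hp0
    have h1 : (1:ℝ) ≤ h := by linarith [hpnorm.le]
    set n := ‖p‖⁻¹ • p with hn
    have hn1 : ‖n‖ = 1 := by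
      rw [hn, norm_smul, norm_inv, norm_norm, inv_mul_cancel₀ (ne_of_gt hpnorm)]
    obtain ⟨u, w, hu, hw, huw⟩ := exists_frame n hn1
    set K := h ^ 2 - 1 - ‖p‖ ^ 2 with hK
    have hK2 : 2 * ‖p‖ ≤ K := by nlinarith
    have hKpos : 0 ≤ K := by nlinarith
    set s := Real.sqrt (K ^ 2 - 4 * ‖p‖ ^ 2) with hs
    have hs0 : 0 ≤ s := Real.sqrt_nonneg _
    have hs2 : s ^ 2 = K ^ 2 - 4 * ‖p‖ ^ 2 := Real.sq_sqrt (by nlinarith)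
    have hsK : s ≤ K := by nlinarith
    set x := (K + s) / 2 with hx
    set y := (K - s) / 2 with hy
    have hx0 : 0 ≤ x := by rw [hx]; linarith
    have hy0 : 0 ≤ y := by rw [hy]; linarith
    have hxy : x * y = ‖p‖ ^ 2 := by rw [hx, hy]; nlinarith
    have hsqxy : Real.sqrt x * Real.sqrt y = ‖p‖ := by
      rw [← Real.sqrt_mul hx0, hxy, Real.sqrt_sq (norm_nonneg p)]
    set a := Real.sqrt x • u with ha
    set b := Real.sqrt y • w with hb
    have hab : cross3 a b = p := by
      rw [ha, hb, cross3_smul_left, cross3_smul_right, smul_smul, hsqxy, huw, hn,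
        smul_inv_smul₀ (ne_of_gt hpnorm)]
    have hna : ‖a‖ ^ 2 = x := by
      rw [ha, norm_smul, hu, mul_one, Real.norm_eq_abs, sq_abs, Real.sq_sqrt hx0]
    have hnb : ‖b‖ ^ 2 = y := by
      rw [hb, norm_smul, hw, mul_one, Real.norm_eq_abs, sq_abs, Real.sq_sqrt hy0]
    have hsum : 1 + ‖a‖ ^ 2 + ‖b‖ ^ 2 + ‖cross3 a b‖ ^ 2 = h ^ 2 := by
      rw [hab, hna, hnb, hx, hy, hK]; ring
    have hH : Real.sqrt (1 + ‖a‖ ^ 2 + ‖b‖ ^ 2 + ‖cross3 a b‖ ^ 2) = h := by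
      rw [hsum, Real.sqrt_sq (by linarith)]
    have mem1 : mk10 a b p h ∈ BImanifold := by
      have := mem_M a b
      rwa [hH, hab] at this
    have mem2 : mk10 (-a) (-b) p h ∈ BImanifold := by
      have := mem_M (-a) (-b)
      rwa [cross3_neg_neg, norm_neg, norm_neg, hH, hab] at this
    have key := hull_convex2 (subset_convexHull ℝ _ mem1) (subset_convexHull ℝ _ mem2)
      (by norm_num : (0:ℝ) ≤ 1/2) (by norm_num)
    have heq : mk10 0 0 p h =
        (1/2 : ℝ) • mk10 a b p h + (1 - 1/2 : ℝ) • mk10 (-a) (-b) p h := by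
      rw [mk10_smul, mk10_smul, mk10_add]
      have ea : (1/2:ℝ) • a + (1-1/2:ℝ) • (-a) = 0 := by module
      have eb : (1/2:ℝ) • b + (1-1/2:ℝ) • (-b) = 0 := by module
      have e1 : (1/2:ℝ) • p + (1-1/2:ℝ) • p = p := by module
      have e2 : 1/2 * h + (1-1/2) * h = h := by ring
      rw [ea, eb, e1, e2]
    rw [heq]
    exact key

lemma sqrt_one_add_sq_le (c : ℝ) (hc : 0 ≤ c) : Real.sqrt (1 + c ^ 2) ≤ 1 + c := by
  rw [show (1:ℝ) + c = Real.sqrt ((1 + c) ^ 2) from (Real.sqrt_sq (by linarith)).symm]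
  exact Real.sqrt_le_sqrt (by nlinarith)

end BIaux
end BIaux3

/-- Theorem 2, first inclusion: the convex hull of the Born–Infeld manifold contains
`{(D,B,P,h) : h ≥ 1 + |D| + |B| + |P|}`. -/
theorem BI_convexHull_contains :
    {v : Euc 10 | 1 + ‖pD v‖ + ‖pB v‖ + ‖pP v‖ ≤ pH v} ⊆
      convexHull ℝ BImanifold := by
  intro v hv
  simp only [Set.mem_setOf_eq] at hv
  rw [← BIaux.mk10_eq v]
  set D := pD v with hD
  set B := pB v with hB
  set P := pP v with hP
  set h := pH v with hh
  set hA := Real.sqrt (1 + ‖(3:ℝ) • D‖ ^ 2) with hhA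
  set hB2 := Real.sqrt (1 + ‖(3:ℝ) • B‖ ^ 2) with hhB
  set hC := 3 * h - hA - hB2 with hhC
  have n3D : ‖(3:ℝ) • D‖ = 3 * ‖D‖ := by rw [norm_smul]; norm_num
  have n3B : ‖(3:ℝ) • B‖ = 3 * ‖B‖ := by rw [norm_smul]; norm_num
  have n3P : ‖(3:ℝ) • P‖ = 3 * ‖P‖ := by rw [norm_smul]; norm_num
  have x1 := BIaux.hullA ((3:ℝ) • D) hA le_rfl
  have x2 := BIaux.hullB ((3:ℝ) • B) hB2 le_rfl
  have hAle : hA ≤ 1 + 3 * ‖D‖ := by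
    rw [hhA, n3D]
    exact BIaux.sqrt_one_add_sq_le (3 * ‖D‖) (by positivity)
  have hBle : hB2 ≤ 1 + 3 * ‖B‖ := by
    rw [hhB, n3B]
    exact BIaux.sqrt_one_add_sq_le (3 * ‖B‖) (by positivity)
  have hCge : 1 + ‖(3:ℝ) • P‖ ≤ hC := by
    rw [n3P, hhC]
    linarith
  have x3 := BIaux.hullC ((3:ℝ) • P) hC hCge
  have w23 := BIaux.hull_convex2 x2 x3 (by norm_num : (0:ℝ) ≤ 1/2) (by norm_num)
  have final := BIaux.hull_convex2 x1 w23 (by norm_num : (0:ℝ) ≤ 1/3) (by norm_num)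
  have inner : (1/2 : ℝ) • mk10 0 ((3:ℝ) • B) 0 hB2 + (1 - 1/2 : ℝ) • mk10 0 0 ((3:ℝ) • P) hC
      = mk10 0 ((3/2:ℝ) • B) ((3/2:ℝ) • P) (1/2 * hB2 + (1 - 1/2) * hC) := by
    rw [BIaux.mk10_smul, BIaux.mk10_smul, BIaux.mk10_add]
    have s1 : (1/2:ℝ) • (0:Euc 3) + (1-1/2:ℝ) • (0:Euc 3) = 0 := by module
    have s2 : (1/2:ℝ) • ((3:ℝ) • B) + (1-1/2:ℝ) • (0:Euc 3) = (3/2:ℝ) • B := by module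
    have s3 : (1/2:ℝ) • (0:Euc 3) + (1-1/2:ℝ) • ((3:ℝ) • P) = (3/2:ℝ) • P := by module
    rw [s1, s2, s3]
  have heq : mk10 D B P h = (1/3:ℝ) • mk10 ((3:ℝ) • D) 0 0 hA
      + (1 - 1/3 : ℝ) • mk10 0 ((3/2:ℝ) • B) ((3/2:ℝ) • P) (1/2 * hB2 + (1 - 1/2) * hC) := by
    rw [BIaux.mk10_smul, BIaux.mk10_smul, BIaux.mk10_add]
    have s1 : (1/3:ℝ) • ((3:ℝ) • D) + (1-1/3:ℝ) • (0:Euc 3) = D := by module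
    have s2 : (1/3:ℝ) • (0:Euc 3) + (1-1/3:ℝ) • ((3/2:ℝ) • B) = B := by module
    have s3 : (1/3:ℝ) • (0:Euc 3) + (1-1/3:ℝ) • ((3/2:ℝ) • P) = P := by module
    have s4 : 1/3 * hA + (1 - 1/3) * (1/2 * hB2 + (1 - 1/2) * hC) = h := by rw [hhC]; ring
    rw [s1, s2, s3, s4]
  rw [heq, ← inner]
  exact final
end

section
/- For every s > 1, every extreme point of the set B_s := {(D,B,P,s) : 1 + |D| + |B| + |P| ≤ s} lies in the convex hull ℳ^c of the Born–Infeld manifold; in particular, for |D| = s−1 the point (D,0,0,s) is the midpoint of two points of ℳ, for |B| = s−1 the point (0,B,0,s) is the midpoint of two points of ℳ, and for |P| = s−1 the point (0,0,P,s) is the midpoint of two points of ℳ. -/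
open MeasureTheory Metric Set Filter
open scoped Topology

/-- The slice `B_s = {(D,B,P,s) : 1 + |D| + |B| + |P| ≤ s}` of `ℝ¹⁰`. -/
def Bslice (s : ℝ) : Set (Euc 10) :=
  {v | pH v = s ∧ 1 + ‖pD v‖ + ‖pB v‖ + ‖pP v‖ ≤ s}

section AuxBI

lemma norm_sq3 (v : Euc 3) : ‖v‖ ^ 2 = v 0 ^ 2 + v 1 ^ 2 + v 2 ^ 2 := by
  rw [EuclideanSpace.norm_eq, Real.sq_sqrt (by positivity)]
  simp [Fin.sum_univ_three, sq_abs]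

lemma inner3 (u v : Euc 3) : (inner ℝ u v : ℝ) = u 0 * v 0 + u 1 * v 1 + u 2 * v 2 := by
  simp [PiLp.inner_apply, Fin.sum_univ_three, RCLike.inner_apply]
  ring

lemma ext3 (u v : Euc 3) (h0 : u 0 = v 0) (h1 : u 1 = v 1) (h2 : u 2 = v 2) : u = v := by
  apply PiLp.ext; intro i; fin_cases i <;> assumption

lemma ext10 (u v : Euc 10) (h : ∀ i, u i = v i) : u = v := PiLp.ext h

@[simp] lemma pD_mk10 (d b p : Euc 3) (h : ℝ) : pD (mk10 d b p h) = d := by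
  apply ext3 <;> rfl
@[simp] lemma pB_mk10 (d b p : Euc 3) (h : ℝ) : pB (mk10 d b p h) = b := by
  apply ext3 <;> rfl
@[simp] lemma pP_mk10 (d b p : Euc 3) (h : ℝ) : pP (mk10 d b p h) = p := by
  apply ext3 <;> rfl
@[simp] lemma pH_mk10 (d b p : Euc 3) (h : ℝ) : pH (mk10 d b p h) = h := rfl

@[simp] lemma pD_zero : pD 0 = 0 := by apply ext3 <;> rfl
@[simp] lemma pB_zero : pB 0 = 0 := by apply ext3 <;> rfl
@[simp] lemma pP_zero : pP 0 = 0 := by apply ext3 <;> rfl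

lemma eta10 (v : Euc 10) : v = mk10 (pD v) (pB v) (pP v) (pH v) := by
  apply ext10; intro i; fin_cases i <;> rfl

lemma mk10_add (d b p d' b' p' : Euc 3) (h h' : ℝ) :
    mk10 d b p h + mk10 d' b' p' h' = mk10 (d + d') (b + b') (p + p') (h + h') := by
  apply ext10; intro i; fin_cases i <;> rfl

lemma mk10_sub (d b p d' b' p' : Euc 3) (h h' : ℝ) :
    mk10 d b p h - mk10 d' b' p' h' = mk10 (d - d') (b - b') (p - p') (h - h') := by
  apply ext10; intro i; fin_cases i <;> rfl

lemma mk10_zero : mk10 0 0 0 0 = 0 := by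
  apply ext10; intro i; fin_cases i <;> rfl

lemma mk10_smul (r : ℝ) (d b p : Euc 3) (h : ℝ) :
    r • mk10 d b p h = mk10 (r • d) (r • b) (r • p) (r * h) := by
  apply ext10; intro i; fin_cases i <;> rfl

lemma midpoint_mk10 (d b p d' b' p' : Euc 3) (h h' : ℝ) :
    midpoint ℝ (mk10 d b p h) (mk10 d' b' p' h') =
      mk10 (midpoint ℝ d d') (midpoint ℝ b b') (midpoint ℝ p p') ((h + h') / 2) := by
  rw [midpoint_eq_smul_add, mk10_add, mk10_smul, midpoint_eq_smul_add,
    midpoint_eq_smul_add, midpoint_eq_smul_add]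
  rw [smul_add, smul_add, smul_add, show (h + h') / 2 = ⅟2 * (h + h') from by rw [invOf_eq_inv]; ring]

lemma cross3_neg_right (u v : Euc 3) : cross3 u (-v) = -cross3 u v := by
  apply ext3 <;> show _ = -(_ : ℝ) <;> simp [cross3] <;> ring_nf
lemma cross3_neg_left (u v : Euc 3) : cross3 (-u) v = -cross3 u v := by
  apply ext3 <;> show _ = -(_ : ℝ) <;> simp [cross3] <;> ring_nf
lemma cross3_smul_smul (r t : ℝ) (u v : Euc 3) :
    cross3 (r • u) (t • v) = (r * t) • cross3 u v := by
  apply ext3 <;> show _ = (r * t) * (_ : ℝ) <;> simp [cross3] <;> ring_nf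

lemma norm_sq_cross3 (u v : Euc 3) :
    ‖cross3 u v‖ ^ 2 = ‖u‖ ^ 2 * ‖v‖ ^ 2 - (inner ℝ u v : ℝ) ^ 2 := by
  rw [norm_sq3, norm_sq3, norm_sq3, inner3]
  show (u 1 * v 2 - u 2 * v 1) ^ 2 + (u 2 * v 0 - u 0 * v 2) ^ 2 +
      (u 0 * v 1 - u 1 * v 0) ^ 2 = _
  ring

lemma cross3_triple (e u : Euc 3) (he : ‖e‖ = 1) (hu : (inner ℝ e u : ℝ) = 0) :
    cross3 e (cross3 u e) = u := by
  have he' : e 0 ^ 2 + e 1 ^ 2 + e 2 ^ 2 = 1 := by rw [← norm_sq3, he]; norm_num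
  have hu' : e 0 * u 0 + e 1 * u 1 + e 2 * u 2 = 0 := by rw [← inner3]; exact hu
  apply ext3 <;> show (_ : ℝ) = _
  · show e 1 * (u 0 * e 1 - u 1 * e 0) - e 2 * (u 2 * e 0 - u 0 * e 2) = u 0
    linear_combination u 0 * he' - e 0 * hu'
  · show e 2 * (u 1 * e 2 - u 2 * e 1) - e 0 * (u 0 * e 1 - u 1 * e 0) = u 1
    linear_combination u 1 * he' - e 1 * hu'
  · show e 0 * (u 2 * e 0 - u 0 * e 2) - e 1 * (u 1 * e 2 - u 2 * e 1) = u 2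
    linear_combination u 2 * he' - e 2 * hu'

lemma exists_unit_perp (u : Euc 3) : ∃ e : Euc 3, ‖e‖ = 1 ∧ (inner ℝ u e : ℝ) = 0 := by
  have h3 : Module.finrank ℝ (Euc 3) = 3 := by simp
  have hpos : 0 < Module.finrank ℝ (ℝ ∙ u)ᗮ := by
    have h1 : Module.finrank ℝ (ℝ ∙ u) ≤ 1 := by
      classical
      simpa using finrank_span_le_card ({u} : Set (Euc 3))
    have h2 := Submodule.finrank_add_finrank_orthogonal (K := ℝ ∙ u)
    omega
  obtain ⟨⟨v, hv⟩, hvne⟩ := Module.finrank_pos_iff_exists_ne_zero.mp hpos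
  have hv0 : v ≠ 0 := by simpa [Submodule.mk_eq_zero] using hvne
  refine ⟨‖v‖⁻¹ • v, ?_, ?_⟩
  · simp [norm_smul, norm_ne_zero_iff.mpr hv0, abs_of_nonneg, inv_mul_cancel₀]
  · have := (Submodule.mem_orthogonal _ _).mp hv u (Submodule.mem_span_singleton_self u)
    rw [real_inner_smul_right]
    rw [real_inner_comm] at this ⊢
    simp [this]

lemma norm_sq_smul (r : ℝ) (v : Euc 3) : ‖r • v‖ ^ 2 = r ^ 2 * ‖v‖ ^ 2 := by
  rw [norm_smul]; simp [mul_pow, sq_abs]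

lemma mk10_mem_BI (d b : Euc 3) (s : ℝ) (hs : 0 ≤ s)
    (hsq : 1 + ‖d‖ ^ 2 + ‖b‖ ^ 2 + ‖cross3 d b‖ ^ 2 = s ^ 2) :
    mk10 d b (cross3 d b) s ∈ BImanifold := by
  refine ⟨by simp, ?_⟩
  show pH _ = _
  rw [pH_mk10, pD_mk10, pB_mk10, pP_mk10, hsq, Real.sqrt_sq hs]

lemma midpoint_D (s : ℝ) (hs : 1 < s) (D : Euc 3) (hD : ‖D‖ = s - 1) :
    ∃ X ∈ BImanifold, ∃ Y ∈ BImanifold, mk10 D 0 0 s = midpoint ℝ X Y := by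
  have hs0 : (0:ℝ) ≤ s := by linarith
  have hden : (0:ℝ) < 1 + (s-1)^2 := by positivity
  obtain ⟨e, he, hDe⟩ := exists_unit_perp D
  set t : ℝ := Real.sqrt (2*(s-1)/(1+(s-1)^2)) with ht
  set b : Euc 3 := t • e with hbdef
  have ht2 : t^2 = 2*(s-1)/(1+(s-1)^2) := Real.sq_sqrt (div_nonneg (by linarith) (by positivity))
  have hb2 : ‖b‖^2 = 2*(s-1)/(1+(s-1)^2) := by
    rw [hbdef, norm_sq_smul, he, ht2]; ring
  have hinner : (inner ℝ D b : ℝ) = 0 := by rw [hbdef, real_inner_smul_right, hDe, mul_zero]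
  have hcross : ‖cross3 D b‖^2 = ‖D‖^2 * ‖b‖^2 := by
    rw [norm_sq_cross3, hinner]; ring
  have hsq : 1 + ‖D‖^2 + ‖b‖^2 + ‖cross3 D b‖^2 = s^2 := by
    rw [hcross, hD, hb2]; field_simp; ring
  have hsq' : 1 + ‖D‖^2 + ‖-b‖^2 + ‖cross3 D (-b)‖^2 = s^2 := by
    rw [cross3_neg_right, norm_neg, norm_neg]; exact hsq
  refine ⟨_, mk10_mem_BI D b s hs0 hsq, _, mk10_mem_BI D (-b) s hs0 hsq', ?_⟩
  rw [midpoint_mk10, cross3_neg_right, midpoint_self]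
  have h1 : midpoint ℝ b (-b) = 0 := by rw [midpoint_eq_smul_add]; simp
  have h2 : midpoint ℝ (cross3 D b) (-cross3 D b) = 0 := by
    rw [midpoint_eq_smul_add]; simp
  rw [h1, h2]
  norm_num

lemma midpoint_B (s : ℝ) (hs : 1 < s) (B : Euc 3) (hB : ‖B‖ = s - 1) :
    ∃ X ∈ BImanifold, ∃ Y ∈ BImanifold, mk10 0 B 0 s = midpoint ℝ X Y := by
  have hs0 : (0:ℝ) ≤ s := by linarith
  obtain ⟨e, he, hBe⟩ := exists_unit_perp B
  set t : ℝ := Real.sqrt (2*(s-1)/(1+(s-1)^2)) with ht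
  set d : Euc 3 := t • e with hddef
  have ht2 : t^2 = 2*(s-1)/(1+(s-1)^2) := Real.sq_sqrt (div_nonneg (by linarith) (by positivity))
  have hd2 : ‖d‖^2 = 2*(s-1)/(1+(s-1)^2) := by
    rw [hddef, norm_sq_smul, he, ht2]; ring
  have hinner : (inner ℝ d B : ℝ) = 0 := by
    rw [hddef, real_inner_smul_left, real_inner_comm, hBe, mul_zero]
  have hcross : ‖cross3 d B‖^2 = ‖d‖^2 * ‖B‖^2 := by
    rw [norm_sq_cross3, hinner]; ring
  have hden : (0:ℝ) < 1 + (s-1)^2 := by positivity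
  have hsq : 1 + ‖d‖^2 + ‖B‖^2 + ‖cross3 d B‖^2 = s^2 := by
    rw [hcross, hB, hd2]; field_simp; ring
  have hsq' : 1 + ‖-d‖^2 + ‖B‖^2 + ‖cross3 (-d) B‖^2 = s^2 := by
    rw [cross3_neg_left, norm_neg, norm_neg]; exact hsq
  refine ⟨_, mk10_mem_BI d B s hs0 hsq, _, mk10_mem_BI (-d) B s hs0 hsq', ?_⟩
  rw [midpoint_mk10, cross3_neg_left, midpoint_self]
  have h1 : midpoint ℝ d (-d) = 0 := by rw [midpoint_eq_smul_add]; simp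
  have h2 : midpoint ℝ (cross3 d B) (-cross3 d B) = 0 := by
    rw [midpoint_eq_smul_add]; simp
  rw [h1, h2]
  norm_num

lemma midpoint_P (s : ℝ) (hs : 1 < s) (P : Euc 3) (hP : ‖P‖ = s - 1) :
    ∃ X ∈ BImanifold, ∃ Y ∈ BImanifold, mk10 0 0 P s = midpoint ℝ X Y := by
  have hs0 : (0:ℝ) ≤ s := by linarith
  have hs1 : (0:ℝ) < s - 1 := by linarith
  set u : Euc 3 := (s-1)⁻¹ • P with hudef
  have hu : ‖u‖ = 1 := by
    rw [hudef, norm_smul, hP, Real.norm_eq_abs, abs_of_pos (by positivity),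
      inv_mul_cancel₀ (ne_of_gt hs1)]
  obtain ⟨e, he, hue⟩ := exists_unit_perp u
  set f : Euc 3 := cross3 u e with hfdef
  have hf2 : ‖f‖^2 = 1 := by
    rw [hfdef, norm_sq_cross3, hu, he, hue]; ring
  have hef : cross3 e f = u := by
    rw [hfdef]
    exact cross3_triple e u he (by rw [real_inner_comm]; exact hue)
  set t : ℝ := Real.sqrt (s-1) with htdef
  have ht2 : t * t = s - 1 := Real.mul_self_sqrt (le_of_lt hs1)
  set d : Euc 3 := t • e with hddef
  set b : Euc 3 := t • f with hbdef
  have hdb : cross3 d b = P := by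
    rw [hddef, hbdef, cross3_smul_smul, hef, ht2, hudef, smul_smul,
      mul_inv_cancel₀ (ne_of_gt hs1), one_smul]
  have hd2 : ‖d‖^2 = s - 1 := by
    rw [hddef, norm_sq_smul, he, sq, ht2]; ring
  have hb2 : ‖b‖^2 = s - 1 := by
    rw [hbdef, norm_sq_smul, hf2, sq, ht2]; ring
  have hsq : 1 + ‖d‖^2 + ‖b‖^2 + ‖cross3 d b‖^2 = s^2 := by
    rw [hdb, hd2, hb2, norm_sq3]
    rw [← norm_sq3, hP]; ring
  have hndb : cross3 (-d) (-b) = P := by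
    rw [cross3_neg_left, cross3_neg_right, neg_neg, hdb]
  have hsq' : 1 + ‖-d‖^2 + ‖-b‖^2 + ‖cross3 (-d) (-b)‖^2 = s^2 := by
    rw [norm_neg, norm_neg, hndb, ← hdb]; exact hsq
  refine ⟨_, mk10_mem_BI d b s hs0 hsq, _, mk10_mem_BI (-d) (-b) s hs0 hsq', ?_⟩
  rw [midpoint_mk10, hdb, hndb, midpoint_self]
  have h1 : midpoint ℝ d (-d) = 0 := by rw [midpoint_eq_smul_add]; simp
  have h2 : midpoint ℝ b (-b) = 0 := by rw [midpoint_eq_smul_add]; simp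
  rw [h1, h2]
  norm_num

lemma mem_Bslice (d b p : Euc 3) (s : ℝ) (h : 1 + ‖d‖ + ‖b‖ + ‖p‖ ≤ s) :
    mk10 d b p s ∈ Bslice s := ⟨pH_mk10 d b p s, by simpa using h⟩

lemma extreme_perturb {s : ℝ} {x : Euc 10} (hx : x ∈ Set.extremePoints ℝ (Bslice s))
    {w : Euc 10} (h1 : x + w ∈ Bslice s) (h2 : x - w ∈ Bslice s) : w = 0 := by
  have hseg : x ∈ openSegment ℝ (x + w) (x - w) := by
    refine ⟨1/2, 1/2, by norm_num, by norm_num, by norm_num, ?_⟩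
    module
  have := hx.2 h1 h2 hseg
  simpa using this

lemma norm_scale_add (v : Euc 3) (r : ℝ) (h : 0 ≤ 1 + r) :
    ‖v + r • v‖ = (1 + r) * ‖v‖ := by
  rw [show v + r • v = (1 + r) • v from by module, norm_smul, Real.norm_eq_abs,
    abs_of_nonneg h]

lemma norm_scale_sub (v : Euc 3) (r : ℝ) (h : r ≤ 1) :
    ‖v - r • v‖ = (1 - r) * ‖v‖ := by
  rw [show v - r • v = (1 - r) • v from by module, norm_smul, Real.norm_eq_abs,
    abs_of_nonneg (by linarith)]

lemma ne_zero_of_smul_div (v : Euc 3) (δ : ℝ) (hδ : 0 < δ) (hv : v ≠ 0)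
    (h : (δ / ‖v‖) • v = 0) : False := by
  rcases smul_eq_zero.mp h with h' | h'
  · have hv0 : 0 < ‖v‖ := norm_pos_iff.mpr hv
    exact absurd h' (ne_of_gt (div_pos hδ hv0))
  · exact hv h'

lemma extreme_structure {s : ℝ} (hs : 1 < s) {x : Euc 10}
    (hx : x ∈ Set.extremePoints ℝ (Bslice s)) :
    x = mk10 (pD x) (pB x) (pP x) s ∧ 1 + ‖pD x‖ + ‖pB x‖ + ‖pP x‖ = s ∧
    (pD x = 0 ∨ pB x = 0) ∧ (pD x = 0 ∨ pP x = 0) ∧ (pB x = 0 ∨ pP x = 0) := by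
  obtain ⟨hH, hle⟩ := hx.1
  set D := pD x with hD
  set B := pB x with hB
  set P := pP x with hP
  have hxeq : x = mk10 D B P s := by rw [← hH]; exact eta10 x
  -- Step 1 : the inequality is an equality
  have hsum : 1 + ‖D‖ + ‖B‖ + ‖P‖ = s := by
    by_contra hne
    have hlt : 1 + ‖D‖ + ‖B‖ + ‖P‖ < s := lt_of_le_of_ne hle hne
    set ε : ℝ := s - (1 + ‖D‖ + ‖B‖ + ‖P‖) with hε
    have hεpos : 0 < ε := by simp only [hε]; linarith
    set e0 : Euc 3 := EuclideanSpace.single (0 : Fin 3) (1 : ℝ) with he0def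
    have he0 : ‖e0‖ = 1 := by simp [he0def]
    have hne0 : ‖ε • e0‖ = ε := by
      rw [norm_smul, he0, Real.norm_eq_abs, abs_of_pos hεpos, mul_one]
    have key : mk10 (ε • e0) 0 0 0 = 0 := by
      refine extreme_perturb hx ?_ ?_
      · rw [hxeq, mk10_add, add_zero, add_zero, add_zero]
        refine mem_Bslice _ _ _ _ ?_
        have := norm_add_le D (ε • e0)
        rw [hne0] at this
        linarith
      · rw [hxeq, mk10_sub, sub_zero, sub_zero, sub_zero]
        refine mem_Bslice _ _ _ _ ?_
        have := norm_sub_le D (ε • e0)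
        rw [hne0] at this
        linarith
    have : ε • e0 = (0 : Euc 3) := by
      have := congrArg pD key
      simpa using this
    rcases smul_eq_zero.mp this with h' | h'
    · exact absurd h' (ne_of_gt hεpos)
    · rw [h'] at he0; simp at he0
  -- Step 2 : pairwise exclusion
  have pairDB : D = 0 ∨ B = 0 := by
    by_contra hc
    push_neg at hc
    obtain ⟨hd0, hb0⟩ := hc
    have hDpos : 0 < ‖D‖ := norm_pos_iff.mpr hd0
    have hBpos : 0 < ‖B‖ := norm_pos_iff.mpr hb0
    set δ : ℝ := min ‖D‖ ‖B‖ with hδdef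
    have hδpos : 0 < δ := lt_min hDpos hBpos
    have hδD : δ ≤ ‖D‖ := min_le_left _ _
    have hδB : δ ≤ ‖B‖ := min_le_right _ _
    have hrD : (0:ℝ) ≤ 1 + δ / ‖D‖ := by positivity
    have hrB : δ / ‖B‖ ≤ 1 := by rw [div_le_one hBpos]; exact hδB
    have hrD' : δ / ‖D‖ ≤ 1 := by rw [div_le_one hDpos]; exact hδD
    have hrB' : (0:ℝ) ≤ 1 + δ / ‖B‖ := by positivity
    have nD1 : ‖D + (δ / ‖D‖) • D‖ = ‖D‖ + δ := by
      rw [norm_scale_add D _ hrD]; field_simp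
    have nD2 : ‖D - (δ / ‖D‖) • D‖ = ‖D‖ - δ := by
      rw [norm_scale_sub D _ hrD']; field_simp
    have nB1 : ‖B + (δ / ‖B‖) • B‖ = ‖B‖ + δ := by
      rw [norm_scale_add B _ hrB']; field_simp
    have nB2 : ‖B - (δ / ‖B‖) • B‖ = ‖B‖ - δ := by
      rw [norm_scale_sub B _ hrB]; field_simp
    have key : mk10 ((δ / ‖D‖) • D) (-((δ / ‖B‖) • B)) 0 0 = 0 := by
      refine extreme_perturb hx ?_ ?_
      · rw [hxeq, mk10_add, add_zero, add_zero,
          show B + -((δ / ‖B‖) • B) = B - (δ / ‖B‖) • B from by module]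
        exact mem_Bslice _ _ _ _ (by rw [nD1, nB2]; linarith)
      · rw [hxeq, mk10_sub, sub_zero, sub_zero,
          show B - -((δ / ‖B‖) • B) = B + (δ / ‖B‖) • B from by module]
        exact mem_Bslice _ _ _ _ (by rw [nD2, nB1]; linarith)
    have : (δ / ‖D‖) • D = (0 : Euc 3) := by
      have := congrArg pD key; simpa using this
    exact ne_zero_of_smul_div D δ hδpos hd0 this
  have pairDP : D = 0 ∨ P = 0 := by
    by_contra hc
    push_neg at hc
    obtain ⟨hd0, hp0⟩ := hc
    have hDpos : 0 < ‖D‖ := norm_pos_iff.mpr hd0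
    have hPpos : 0 < ‖P‖ := norm_pos_iff.mpr hp0
    set δ : ℝ := min ‖D‖ ‖P‖ with hδdef
    have hδpos : 0 < δ := lt_min hDpos hPpos
    have hδD : δ ≤ ‖D‖ := min_le_left _ _
    have hδP : δ ≤ ‖P‖ := min_le_right _ _
    have hrD : (0:ℝ) ≤ 1 + δ / ‖D‖ := by positivity
    have hrP : δ / ‖P‖ ≤ 1 := by rw [div_le_one hPpos]; exact hδP
    have hrD' : δ / ‖D‖ ≤ 1 := by rw [div_le_one hDpos]; exact hδD
    have hrP' : (0:ℝ) ≤ 1 + δ / ‖P‖ := by positivity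
    have nD1 : ‖D + (δ / ‖D‖) • D‖ = ‖D‖ + δ := by
      rw [norm_scale_add D _ hrD]; field_simp
    have nD2 : ‖D - (δ / ‖D‖) • D‖ = ‖D‖ - δ := by
      rw [norm_scale_sub D _ hrD']; field_simp
    have nP1 : ‖P + (δ / ‖P‖) • P‖ = ‖P‖ + δ := by
      rw [norm_scale_add P _ hrP']; field_simp
    have nP2 : ‖P - (δ / ‖P‖) • P‖ = ‖P‖ - δ := by
      rw [norm_scale_sub P _ hrP]; field_simp
    have key : mk10 ((δ / ‖D‖) • D) 0 (-((δ / ‖P‖) • P)) 0 = 0 := by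
      refine extreme_perturb hx ?_ ?_
      · rw [hxeq, mk10_add, add_zero, add_zero,
          show P + -((δ / ‖P‖) • P) = P - (δ / ‖P‖) • P from by module]
        exact mem_Bslice _ _ _ _ (by rw [nD1, nP2]; linarith)
      · rw [hxeq, mk10_sub, sub_zero, sub_zero,
          show P - -((δ / ‖P‖) • P) = P + (δ / ‖P‖) • P from by module]
        exact mem_Bslice _ _ _ _ (by rw [nD2, nP1]; linarith)
    have : (δ / ‖D‖) • D = (0 : Euc 3) := by
      have := congrArg pD key; simpa using this
    exact ne_zero_of_smul_div D δ hδpos hd0 this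
  have pairBP : B = 0 ∨ P = 0 := by
    by_contra hc
    push_neg at hc
    obtain ⟨hb0, hp0⟩ := hc
    have hBpos : 0 < ‖B‖ := norm_pos_iff.mpr hb0
    have hPpos : 0 < ‖P‖ := norm_pos_iff.mpr hp0
    set δ : ℝ := min ‖B‖ ‖P‖ with hδdef
    have hδpos : 0 < δ := lt_min hBpos hPpos
    have hδB : δ ≤ ‖B‖ := min_le_left _ _
    have hδP : δ ≤ ‖P‖ := min_le_right _ _
    have hrB : (0:ℝ) ≤ 1 + δ / ‖B‖ := by positivity
    have hrP : δ / ‖P‖ ≤ 1 := by rw [div_le_one hPpos]; exact hδP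
    have hrB' : δ / ‖B‖ ≤ 1 := by rw [div_le_one hBpos]; exact hδB
    have hrP' : (0:ℝ) ≤ 1 + δ / ‖P‖ := by positivity
    have nB1 : ‖B + (δ / ‖B‖) • B‖ = ‖B‖ + δ := by
      rw [norm_scale_add B _ hrB]; field_simp
    have nB2 : ‖B - (δ / ‖B‖) • B‖ = ‖B‖ - δ := by
      rw [norm_scale_sub B _ hrB']; field_simp
    have nP1 : ‖P + (δ / ‖P‖) • P‖ = ‖P‖ + δ := by
      rw [norm_scale_add P _ hrP']; field_simp
    have nP2 : ‖P - (δ / ‖P‖) • P‖ = ‖P‖ - δ := by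
      rw [norm_scale_sub P _ hrP]; field_simp
    have key : mk10 0 ((δ / ‖B‖) • B) (-((δ / ‖P‖) • P)) 0 = 0 := by
      refine extreme_perturb hx ?_ ?_
      · rw [hxeq, mk10_add, add_zero, add_zero,
          show P + -((δ / ‖P‖) • P) = P - (δ / ‖P‖) • P from by module]
        exact mem_Bslice _ _ _ _ (by rw [nB1, nP2]; linarith)
      · rw [hxeq, mk10_sub, sub_zero, sub_zero,
          show P - -((δ / ‖P‖) • P) = P + (δ / ‖P‖) • P from by module]
        exact mem_Bslice _ _ _ _ (by rw [nB2, nP1]; linarith)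
    have : (δ / ‖B‖) • B = (0 : Euc 3) := by
      have := congrArg pB key; simpa using this
    exact ne_zero_of_smul_div B δ hδpos hb0 this
  exact ⟨hxeq, hsum, pairDB, pairDP, pairBP⟩

end AuxBI

/-- For `s > 1` every extreme point of `B_s` lies in the convex hull of the
Born–Infeld manifold; in particular the points `(D,0,0,s)`, `(0,B,0,s)` and
`(0,0,P,s)` with `|D| = |B| = |P| = s-1` are midpoints of two points of `ℳ`. -/
theorem extremePoints_Bslice_mem_convexHull (s : ℝ) (hs : 1 < s) :
    Set.extremePoints ℝ (Bslice s) ⊆ convexHull ℝ BImanifold ∧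
    (∀ D : Euc 3, ‖D‖ = s - 1 →
      ∃ X ∈ BImanifold, ∃ Y ∈ BImanifold, mk10 D 0 0 s = midpoint ℝ X Y) ∧
    (∀ B : Euc 3, ‖B‖ = s - 1 →
      ∃ X ∈ BImanifold, ∃ Y ∈ BImanifold, mk10 0 B 0 s = midpoint ℝ X Y) ∧
    (∀ P : Euc 3, ‖P‖ = s - 1 →
      ∃ X ∈ BImanifold, ∃ Y ∈ BImanifold, mk10 0 0 P s = midpoint ℝ X Y) := by
  refine ⟨?_, fun D hD => midpoint_D s hs D hD, fun B hB => midpoint_B s hs B hB,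
    fun P hP => midpoint_P s hs P hP⟩
  intro x hx
  obtain ⟨hxeq, hsum, pDB, pDP, pBP⟩ := extreme_structure hs hx
  have conv := convex_convexHull ℝ BImanifold
  have sub := subset_convexHull ℝ BImanifold
  by_cases hD : pD x = 0
  · by_cases hB : pB x = 0
    · have hP : ‖pP x‖ = s - 1 := by rw [hD, hB] at hsum; simp at hsum; linarith
      obtain ⟨X, hX, Y, hY, hm⟩ := midpoint_P s hs (pP x) hP
      rw [hxeq, hD, hB, hm]
      exact conv.segment_subset (sub hX) (sub hY) (midpoint_mem_segment X Y)
    · have hP : pP x = 0 := pBP.resolve_left hB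
      have hBn : ‖pB x‖ = s - 1 := by rw [hD, hP] at hsum; simp at hsum; linarith
      obtain ⟨X, hX, Y, hY, hm⟩ := midpoint_B s hs (pB x) hBn
      rw [hxeq, hD, hP, hm]
      exact conv.segment_subset (sub hX) (sub hY) (midpoint_mem_segment X Y)
  · have hB : pB x = 0 := pDB.resolve_left hD
    have hP : pP x = 0 := pDP.resolve_left hD
    have hDn : ‖pD x‖ = s - 1 := by rw [hB, hP] at hsum; simp at hsum; linarith
    obtain ⟨X, hX, Y, hY, hm⟩ := midpoint_D s hs (pD x) hDn
    rw [hxeq, hB, hP, hm]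
    exact conv.segment_subset (sub hX) (sub hY) (midpoint_mem_segment X Y)
end

section
/- Let M ⊂ ℝ^d be a set whose convex hull M^c has non-empty interior and let L ⊂ Int(M^c) be compact. Then there exist R > 0 and open sets {𝒰_i}_{i≥1} ⊂ ℝ^d such that: (1) L ⊂ 𝒰₁; (2) 𝒰_i ⊂ (𝒰_{i+1})^c for all i ≥ 1, where (·)^c denotes convex hull; (3) 𝒰_i ⊂ B(0,R) for all i ≥ 1; (4) every point of 𝒰_i has distance less than 1/i from M, for all i ≥ 2. In particular the sets 𝒰_i form an in-approximation of M with respect to the convex hull. -/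
open MeasureTheory Metric Set Filter
open scoped Topology

private lemma aux_finite_hull {d : ℕ} (M : Set (EuclideanSpace ℝ (Fin d)))
    (hM : (interior (convexHull ℝ M)).Nonempty)
    (K : Set (EuclideanSpace ℝ (Fin d))) (hKc : IsCompact K)
    (hK : K ⊆ interior (convexHull ℝ M)) :
    ∃ T : Set (EuclideanSpace ℝ (Fin d)), T.Finite ∧ T ⊆ M ∧
      K ⊆ interior (convexHull ℝ T) := by
  classical
  -- a finite subset t of M whose hull has an interior point w
  obtain ⟨t, htfin, hts, w, hw⟩ : ∃ t : Set (EuclideanSpace ℝ (Fin d)), t.Finite ∧ t ⊆ M ∧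
      ∃ w, w ∈ interior (convexHull ℝ t) := by
    have hspan : affineSpan ℝ M = ⊤ :=
      interior_convexHull_nonempty_iff_affineSpan_eq_top.mp hM
    obtain ⟨t, hts, b, hb⟩ := AffineBasis.exists_affine_subbasis hspan
    have hfin : t.Finite := b.finite_set
    haveI : Fintype t := hfin.fintype
    have := b.centroid_mem_interior_convexHull
    rw [hb, Subtype.range_coe] at this
    exact ⟨t, hfin, hts, _, this⟩
  -- for each x ∈ K, a finite S ⊆ M with x ∈ interior conv (S ∪ t)
  have key : ∀ x : K, ∃ S : Set (EuclideanSpace ℝ (Fin d)), S.Finite ∧ S ⊆ M ∧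
      (x : EuclideanSpace ℝ (Fin d)) ∈ interior (convexHull ℝ (S ∪ t)) := by
    rintro ⟨x, hx⟩
    simp only
    obtain ⟨ε, hε, hball⟩ : ∃ ε > 0, ball x ε ⊆ convexHull ℝ M := by
      obtain ⟨ε, hε, hball⟩ := Metric.mem_nhds_iff.mp
        (mem_interior_iff_mem_nhds.mp (hK hx))
      exact ⟨ε, hε, hball⟩
    obtain ⟨η, hηpos, hηlt⟩ : ∃ η : ℝ, 0 < η ∧ η * ‖x - w‖ < ε := by
      refine ⟨ε / (2 * (‖x - w‖ + 1)), by positivity, ?_⟩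
      rw [div_mul_eq_mul_div, div_lt_iff₀ (by positivity)]
      nlinarith [norm_nonneg (x - w)]
    set y := x + η • (x - w) with hy_def
    have hy : y ∈ convexHull ℝ M := by
      apply hball
      simp only [mem_ball, dist_eq_norm, hy_def]
      have h2 : x + η • (x - w) - x = η • (x - w) := by abel
      rw [h2, norm_smul, Real.norm_eq_abs, abs_of_pos hηpos]
      exact hηlt
    -- Caratheodory
    obtain ⟨S, hSM, hyS⟩ : ∃ S : Finset (EuclideanSpace ℝ (Fin d)), ↑S ⊆ M ∧
        y ∈ convexHull ℝ (S : Set (EuclideanSpace ℝ (Fin d))) := by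
      rw [convexHull_eq_union_convexHull_finite_subsets] at hy
      simpa using hy
    refine ⟨S, S.finite_toSet, hSM, ?_⟩
    have hconv : Convex ℝ (convexHull ℝ ((S : Set (EuclideanSpace ℝ (Fin d))) ∪ t)) :=
      convex_convexHull ℝ _
    have hwmem : w ∈ interior (convexHull ℝ ((S : Set (EuclideanSpace ℝ (Fin d))) ∪ t)) :=
      interior_mono (convexHull_mono subset_union_right) hw
    have hymem : y ∈ convexHull ℝ ((S : Set (EuclideanSpace ℝ (Fin d))) ∪ t) :=
      convexHull_mono subset_union_left hyS
    have h1 : (1 : ℝ) + η ≠ 0 := by positivity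
    have habc : (η / (1 + η)) + (1 / (1 + η)) = 1 := by
      field_simp
      ring
    have := hconv.combo_interior_self_subset_interior
      (a := η / (1 + η)) (b := 1 / (1 + η)) (by positivity) (by positivity) habc
    apply this
    refine ⟨(η / (1 + η)) • w, smul_mem_smul_set hwmem,
            (1 / (1 + η)) • y, smul_mem_smul_set hymem, ?_⟩
    rw [hy_def]
    match_scalars <;> field_simp <;> ring
  choose S hSfin hSM hmem using key
  -- compactness
  have hcover : K ⊆ ⋃ x : K, interior (convexHull ℝ (S x ∪ t)) := by
    intro x hx
    exact mem_iUnion.mpr ⟨⟨x, hx⟩, hmem ⟨x, hx⟩⟩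
  obtain ⟨F, hF⟩ := hKc.elim_finite_subcover
    (fun x : K => interior (convexHull ℝ (S x ∪ t))) (fun _ => isOpen_interior) hcover
  refine ⟨t ∪ ⋃ x ∈ F, S x, ?_, ?_, ?_⟩
  · exact htfin.union (F.finite_toSet.biUnion fun x _ => hSfin x)
  · exact union_subset hts (iUnion₂_subset fun x _ => hSM x)
  · intro x hx
    obtain ⟨i, hi, hxi⟩ := mem_iUnion₂.mp (hF hx)
    refine interior_mono (convexHull_mono ?_) hxi
    apply union_subset
    · exact (subset_biUnion_of_mem hi).trans subset_union_right
    · exact subset_union_left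

private lemma hom_eq {d : ℕ} (z : EuclideanSpace ℝ (Fin d)) (r : ℝ)
    (x : EuclideanSpace ℝ (Fin d)) :
    AffineMap.homothety z r x = r • (x - z) + z := by
  simp [AffineMap.homothety_apply, vsub_eq_sub, vadd_eq_add]

private lemma aux_cball {d : ℕ} (z : EuclideanSpace ℝ (Fin d)) (ρ : ℝ)
    (T : Set (EuclideanSpace ℝ (Fin d)))
    (hball : closedBall z ρ ⊆ convexHull ℝ T)
    {a b : ℝ} (hb : 0 < b) (hba : b < a) (ha : a ≤ 1/2)
    (y : EuclideanSpace ℝ (Fin d)) (hy : y ∈ convexHull ℝ T)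
    (p : EuclideanSpace ℝ (Fin d))
    (hp : dist p (AffineMap.homothety z (1 - a) y) ≤ ρ * (a - b)) :
    p ∈ convexHull ℝ ((AffineMap.homothety z (1 - b)) '' T) := by
  have hEconv : Convex ℝ (convexHull ℝ T) := convex_convexHull ℝ T
  have hab : (0:ℝ) < a - b := by linarith
  have h1b : (0:ℝ) < 1 - b := by linarith
  set u := p - AffineMap.homothety z (1 - a) y with hu_def
  have hu : ‖u‖ ≤ ρ * (a - b) := by rwa [dist_eq_norm] at hp
  set w := z + (a - b)⁻¹ • u with hw_def
  have hwE : w ∈ convexHull ℝ T := by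
    apply hball
    rw [mem_closedBall, dist_eq_norm]
    have h2 : w - z = (a - b)⁻¹ • u := by rw [hw_def]; abel
    rw [h2, norm_smul, Real.norm_eq_abs, abs_of_pos (by positivity),
      inv_mul_le_iff₀ hab]
    linarith [hu]
  set s := (a - b) / (1 - b) with hs_def
  have hs0 : 0 ≤ s := div_nonneg hab.le h1b.le
  have hs1 : s ≤ 1 := by
    rw [hs_def, div_le_one h1b]; linarith
  have hq : (1 - s) • y + s • w ∈ convexHull ℝ T :=
    hEconv hy hwE (by linarith) hs0 (by ring)
  have himg : (AffineMap.homothety z (1 - b)) '' (convexHull ℝ T)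
      = convexHull ℝ ((AffineMap.homothety z (1 - b)) '' T) :=
    AffineMap.image_convexHull _ _
  rw [← himg]
  refine ⟨(1 - s) • y + s • w, hq, ?_⟩
  have hexp : p = ((1 - a) • (y - z) + z) + u := by
    rw [hu_def, hom_eq]; abel
  rw [hom_eq, hexp, hw_def, hs_def]
  match_scalars <;> field_simp <;> ring



private lemma aux_near {d : ℕ} (z : EuclideanSpace ℝ (Fin d)) {ρ : ℝ} (hρ : 0 < ρ)
    (T : Set (EuclideanSpace ℝ (Fin d)))
    (hball : closedBall z ρ ⊆ convexHull ℝ T)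
    {a b : ℝ} (hb : 0 < b) (hba : b < a) (ha : a ≤ 1/2)
    (y : EuclideanSpace ℝ (Fin d)) (hy : y ∈ convexHull ℝ T)
    (x : EuclideanSpace ℝ (Fin d))
    (hx : x ∈ ball (AffineMap.homothety z (1 - a) y) (ρ * a)) :
    ∃ e ∈ convexHull ℝ ((AffineMap.homothety z (1 - b)) '' T), dist x e < ρ * b := by
  set c := AffineMap.homothety z (1 - a) y with hc_def
  have hxc : dist x c < ρ * a := by rwa [mem_ball] at hx
  set r := ρ * (a - b) with hr_def
  have hrnn : 0 ≤ r := mul_nonneg hρ.le (by linarith)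
  rcases le_or_gt (dist x c) r with h | h
  · exact ⟨x, aux_cball z ρ T hball hb hba ha y hy x h, by simpa using by positivity⟩
  · have hdpos : 0 < dist x c := lt_of_le_of_lt hrnn h
    set e := c + (r / dist x c) • (x - c) with he_def
    have hec : dist e c = r := by
      rw [dist_eq_norm]
      have h2 : e - c = (r / dist x c) • (x - c) := by rw [he_def]; abel
      rw [h2, norm_smul, Real.norm_eq_abs, abs_of_nonneg (by positivity),
        ← dist_eq_norm]
      field_simp
    refine ⟨e, aux_cball z ρ T hball hb hba ha y hy e (le_of_eq hec), ?_⟩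
    have h3 : x - e = (1 - r / dist x c) • (x - c) := by
      rw [he_def]
      rw [sub_smul, one_smul]
      abel
    rw [dist_eq_norm, h3, norm_smul, Real.norm_eq_abs,
      abs_of_nonneg (by rw [sub_nonneg, div_le_one hdpos]; exact h.le), ← dist_eq_norm]
    have : (1 - r / dist x c) * dist x c = dist x c - r := by field_simp
    rw [this]
    rw [hr_def]
    linarith

private lemma aux_conv {d : ℕ} (z : EuclideanSpace ℝ (Fin d)) {ρ : ℝ}
    (T W : Set (EuclideanSpace ℝ (Fin d))) {b : ℝ}
    (hW : ∀ t ∈ T, ball (AffineMap.homothety z (1 - b) t) (ρ * b) ⊆ W)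
    (x : EuclideanSpace ℝ (Fin d))
    (hx : ∃ e ∈ convexHull ℝ ((AffineMap.homothety z (1 - b)) '' T), dist x e < ρ * b) :
    x ∈ convexHull ℝ W := by
  obtain ⟨e, he, hd⟩ := hx
  set v := x - e with hv_def
  have himg := AffineMap.image_convexHull
    (AffineEquiv.constVAdd ℝ (EuclideanSpace ℝ (Fin d)) v).toAffineMap
    ((AffineMap.homothety z (1 - b)) '' T)
  have hxmem : x ∈ (AffineEquiv.constVAdd ℝ (EuclideanSpace ℝ (Fin d)) v).toAffineMap ''
      convexHull ℝ ((AffineMap.homothety z (1 - b)) '' T) := by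
    refine ⟨e, he, ?_⟩
    show v +ᵥ e = x
    rw [vadd_eq_add, hv_def]
    abel
  rw [himg] at hxmem
  refine convexHull_mono ?_ hxmem
  rintro _ ⟨_, ⟨t, ht, rfl⟩, rfl⟩
  apply hW t ht
  show v +ᵥ AffineMap.homothety z (1 - b) t ∈ _
  rw [mem_ball, vadd_eq_add, dist_eq_norm]
  have h4 : v + AffineMap.homothety z (1 - b) t - AffineMap.homothety z (1 - b) t = v := by abel
  rw [h4, hv_def, ← dist_eq_norm]
  exact hd

set_option maxHeartbeats 1000000 in
/-- Lemma 9 (covering): existence of an in-approximation (with respect to the ordinary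
convex hull) of a set `M` whose convex hull has non-empty interior, starting from any
compact subset `L` of the interior of the convex hull. -/
theorem exists_in_approximation {d : ℕ} (M : Set (Euc d))
    (hM : (interior (convexHull ℝ M)).Nonempty)
    (L : Set (Euc d)) (hLc : IsCompact L)
    (hL : L ⊆ interior (convexHull ℝ M)) :
    ∃ (R : ℝ) (U : ℕ → Set (Euc d)), 0 < R ∧
      (∀ i, 1 ≤ i → IsOpen (U i)) ∧
      L ⊆ U 1 ∧
      (∀ i, 1 ≤ i → U i ⊆ convexHull ℝ (U (i + 1))) ∧
      (∀ i, 1 ≤ i → U i ⊆ Metric.closedBall (0 : Euc d) R) ∧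
      (∀ i : ℕ, 2 ≤ i → ∀ x ∈ U i, Metric.infDist x M < 1 / (i : ℝ)) := by
  classical
  obtain ⟨z, hz⟩ := hM
  obtain ⟨ρ, hρpos, hρ⟩ : ∃ ρ : ℝ, 0 < ρ ∧ closedBall z ρ ⊆ interior (convexHull ℝ M) := by
    obtain ⟨ε, hε, h⟩ := Metric.mem_nhds_iff.mp (isOpen_interior.mem_nhds hz)
    exact ⟨ε/2, by linarith, (closedBall_subset_ball (by linarith)).trans h⟩
  obtain ⟨T, hTfin, hTM, hKT⟩ := aux_finite_hull M ⟨z, hz⟩ (L ∪ closedBall z ρ)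
    (hLc.union (isCompact_closedBall z ρ)) (union_subset hL hρ)
  have hLE : L ⊆ interior (convexHull ℝ T) := subset_union_left.trans hKT
  have hball : closedBall z ρ ⊆ convexHull ℝ T :=
    (subset_union_right.trans hKT).trans interior_subset
  have hzT : z ∈ convexHull ℝ T := hball (mem_closedBall_self hρpos.le)
  obtain ⟨δ, hδpos, hδ⟩ := hLc.exists_thickening_subset_open isOpen_interior hLE
  obtain ⟨D0, hD0⟩ : ∃ D0, T ⊆ closedBall z D0 := hTfin.isBounded.subset_closedBall z
  set D := max D0 0 with hD_def
  have hDnn : 0 ≤ D := le_max_right _ _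
  have hE_cb : convexHull ℝ T ⊆ closedBall z D :=
    convexHull_min (hD0.trans (closedBall_subset_closedBall (le_max_left _ _)))
      (convex_closedBall z D)
  set μ := min (min (1/2) (1/(2*(ρ + D + 1)))) (δ/(2*(D+1))) with hμ_def
  have hμpos : 0 < μ := by
    apply lt_min (lt_min (by norm_num) (by positivity)) (by positivity)
  have hμhalf : μ ≤ 1/2 := le_trans (min_le_left _ _) (min_le_left _ _)
  have hμρD : μ * (ρ + D) ≤ 1/2 := by
    have h1 : μ ≤ 1/(2*(ρ + D + 1)) := le_trans (min_le_left _ _) (min_le_right _ _)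
    have h2 : (0:ℝ) < 2*(ρ + D + 1) := by positivity
    rw [le_div_iff₀ h2] at h1
    nlinarith
  have hμD : μ * D < δ := by
    have h1 : μ ≤ δ/(2*(D+1)) := min_le_right _ _
    have h2 : (0:ℝ) < 2*(D+1) := by positivity
    rw [le_div_iff₀ h2] at h1
    nlinarith
  set lam : ℕ → ℝ := fun i => μ / i with hlam_def
  have hlam_pos : ∀ i : ℕ, 1 ≤ i → 0 < lam i := by
    intro i hi
    have : (0:ℝ) < i := by exact_mod_cast hi
    exact div_pos hμpos this
  have hlam_half : ∀ i : ℕ, 1 ≤ i → lam i ≤ 1/2 := by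
    intro i hi
    have hi' : (1:ℝ) ≤ i := by exact_mod_cast hi
    calc lam i ≤ μ := div_le_self hμpos.le hi'
      _ ≤ 1/2 := hμhalf
  have hlam_lt : ∀ i : ℕ, 1 ≤ i → lam (i+1) < lam i := by
    intro i hi
    have h1 : (0:ℝ) < i := by exact_mod_cast hi
    rw [hlam_def]
    simp only
    push_cast
    exact div_lt_div_of_pos_left hμpos h1 (by linarith)
  set f : ℕ → (Euc d →ᵃ[ℝ] Euc d) := fun i => AffineMap.homothety z (1 - lam i) with hf_def
  have hfT : ∀ j : ℕ, 1 ≤ j → ∀ t ∈ T, f j t ∈ convexHull ℝ T := by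
    intro j hj t ht
    rw [hf_def]
    simp only
    rw [hom_eq]
    have h1 : (1 - lam j) • (t - z) + z = (1 - lam j) • t + lam j • z := by
      match_scalars <;> ring
    rw [h1]
    exact (convex_convexHull ℝ T) (subset_convexHull ℝ T ht) hzT
      (by linarith [hlam_half j hj]) (hlam_pos j hj).le (by ring)
  have hfhull : ∀ j : ℕ, 1 ≤ j → convexHull ℝ (f j '' T) ⊆ closedBall z D := by
    intro j hj
    have himg : f j '' T ⊆ closedBall z D := by
      rintro _ ⟨t, ht, rfl⟩
      exact hE_cb (hfT j hj t ht)
    exact convexHull_min himg (convex_closedBall z D)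
  set U : ℕ → Set (Euc d) := fun i =>
    if i ≤ 1 then thickening (ρ * lam 2) (convexHull ℝ (f 2 '' T))
    else ⋃ t ∈ T, ball (f i t) (ρ * lam i) with hU_def
  refine ⟨‖z‖ + D + ρ + 1, U, by positivity, ?_, ?_, ?_, ?_, ?_⟩
  · -- open
    intro i hi
    rw [hU_def]
    by_cases h : i ≤ 1
    · simp only [if_pos h]
      exact isOpen_thickening
    · simp only [if_neg h]
      exact isOpen_biUnion fun t _ => isOpen_ball
  · -- L ⊆ U 1
    intro x hx
    have hxT : x ∈ convexHull ℝ T := interior_subset (hLE hx)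
    have hxD : dist x z ≤ D := hE_cb hxT
    set a := lam 2 with ha_def
    have ha_pos : 0 < a := hlam_pos 2 (by norm_num)
    have ha_le : a ≤ 1/2 := hlam_half 2 (by norm_num)
    have h1a : (0:ℝ) < 1 - a := by linarith
    set y := z + (1 - a)⁻¹ • (x - z) with hy_def
    have hyx : dist y x ≤ μ * D := by
      rw [dist_eq_norm]
      have h2 : y - x = ((1 - a)⁻¹ - 1) • (x - z) := by
        rw [hy_def, sub_smul, one_smul]; abel
      rw [h2, norm_smul, Real.norm_eq_abs]
      have h3 : (1 - a)⁻¹ - 1 = a / (1 - a) := by field_simp; ring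
      have h4 : (0:ℝ) ≤ a / (1 - a) := by positivity
      rw [h3, abs_of_nonneg h4]
      have h5 : a / (1 - a) ≤ μ := by
        rw [div_le_iff₀ h1a, ha_def, hlam_def]
        push_cast
        nlinarith
      have h7 : ‖x - z‖ ≤ D := by rw [← dist_eq_norm]; exact hxD
      exact mul_le_mul h5 h7 (norm_nonneg _) hμpos.le
    have hyT : y ∈ convexHull ℝ T := by
      apply interior_subset
      apply hδ
      rw [mem_thickening_iff]
      exact ⟨x, hx, lt_of_le_of_lt hyx hμD⟩
    have hfy : f 2 y = x := by
      rw [hf_def]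
      simp only
      rw [hom_eq, hy_def]
      have h6 : (1 - lam 2) • (z + (1 - lam 2)⁻¹ • (x - z) - z) = x - z := by
        rw [add_sub_cancel_left, smul_smul, mul_inv_cancel₀ (by rw [← ha_def]; linarith),
          one_smul]
      rw [h6]
      abel
    have hxhull : x ∈ convexHull ℝ (f 2 '' T) := by
      rw [← AffineMap.image_convexHull]
      exact ⟨y, hyT, hfy⟩
    rw [hU_def]
    simp only [if_pos (le_refl 1)]
    exact self_subset_thickening (by positivity) _ hxhull
  · -- U i ⊆ convexHull (U (i+1))
    intro i hi
    have hi1 : ¬ (i + 1 ≤ 1) := by omega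
    have hW : ∀ t ∈ T, ball (f (i+1) t) (ρ * lam (i+1)) ⊆ U (i+1) := by
      intro t ht
      rw [hU_def]
      simp only [if_neg hi1]
      exact subset_biUnion_of_mem (u := fun t => ball (f (i+1) t) (ρ * lam (i+1))) ht
    have hcond : 0 < lam (i+1) ∧ lam (i+1) < lam i ∧ lam i ≤ 1/2 :=
      ⟨hlam_pos (i+1) (by omega), hlam_lt i hi, hlam_half i hi⟩
    rcases eq_or_lt_of_le hi with heq | hlt
    · -- i = 1
      subst heq
      intro x hx
      rw [hU_def] at hx
      simp only [if_pos (le_refl 1)] at hx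
      rw [mem_thickening_iff] at hx
      exact aux_conv z T (U (1+1)) hW x hx
    · -- 2 ≤ i
      intro x hx
      rw [hU_def] at hx
      simp only [if_neg (by omega : ¬ (i ≤ 1))] at hx
      obtain ⟨t, ht, hxt⟩ := mem_iUnion₂.mp hx
      have he := aux_near z hρpos T hball hcond.1 hcond.2.1 hcond.2.2 t
        (subset_convexHull ℝ T ht) x hxt
      exact aux_conv z T (U (i+1)) hW x he
  · -- bounded
    intro i hi x hx
    rw [hU_def] at hx
    have hbound : ∀ e, e ∈ closedBall z D → dist x e ≤ ρ → x ∈ closedBall (0 : Euc d) (‖z‖ + D + ρ + 1) := by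
      intro e he hxe
      rw [mem_closedBall, dist_eq_norm, sub_zero]
      calc ‖x‖ ≤ ‖x - e‖ + ‖e - z‖ + ‖z‖ := by
            have := norm_add₃_le (a := x - e) (b := e - z) (c := z)
            simpa using this
        _ ≤ ρ + D + ‖z‖ := by
            rw [mem_closedBall, dist_eq_norm] at he
            rw [dist_eq_norm] at hxe
            linarith
        _ ≤ ‖z‖ + D + ρ + 1 := by linarith
    by_cases h : i ≤ 1
    · simp only [if_pos h] at hx
      rw [mem_thickening_iff] at hx
      obtain ⟨e, he, hxe⟩ := hx
      refine hbound e (hfhull 2 (by norm_num) he) ?_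
      have : ρ * lam 2 ≤ ρ := by
        have := hlam_half 2 (by norm_num)
        nlinarith
      linarith
    · simp only [if_neg h] at hx
      obtain ⟨t, ht, hxt⟩ := mem_iUnion₂.mp hx
      refine hbound (f i t) (hE_cb (hfT i (by omega) t ht)) ?_
      rw [mem_ball] at hxt
      have : ρ * lam i ≤ ρ := by
        have := hlam_half i (by omega)
        nlinarith
      linarith [hxt.le]
  · -- distance
    intro i hi x hx
    rw [hU_def] at hx
    simp only [if_neg (by omega : ¬ (i ≤ 1))] at hx
    obtain ⟨t, ht, hxt⟩ := mem_iUnion₂.mp hx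
    rw [mem_ball] at hxt
    have hipos : (0:ℝ) < i := by
      have : (1:ℕ) ≤ i := by omega
      exact_mod_cast lt_of_lt_of_le zero_lt_one (by exact_mod_cast this)
    have hft : dist (f i t) t ≤ lam i * D := by
      rw [hf_def]
      simp only
      rw [hom_eq, dist_eq_norm]
      have h1 : (1 - lam i) • (t - z) + z - t = lam i • (z - t) := by
        match_scalars <;> ring
      rw [h1, norm_smul, Real.norm_eq_abs, abs_of_pos (hlam_pos i (by omega))]
      have h2 : ‖z - t‖ ≤ D := by
        rw [norm_sub_rev, ← dist_eq_norm]
        exact hE_cb (subset_convexHull ℝ T ht)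
      exact mul_le_mul_of_nonneg_left h2 (hlam_pos i (by omega)).le
    have h3 : Metric.infDist x M ≤ dist x t := Metric.infDist_le_dist_of_mem (hTM ht)
    have h4 : dist x t ≤ dist x (f i t) + dist (f i t) t := dist_triangle _ _ _
    have h5 : lam i * (ρ + D) < 1 / (i:ℝ) := by
      rw [hlam_def]
      simp only
      rw [div_mul_eq_mul_div, div_lt_div_iff₀ hipos hipos]
      nlinarith
    have h6 : ρ * lam i + lam i * D = lam i * (ρ + D) := by ring
    linarith
end
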